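/- arXiv:math/0106037 — 4 statements merged into one kernel-verified Lean document; each statement's English description precedes it below -/
import Mathlib

section
/- For every real number a > 0, every integer N ≥ 2, and every real number z with |z| > N·a, the integral ∫_{-∞}^{∞} (sin(aω)/(aω))^N · e^{-iωz} dω equals 0 (the integrand being extended by the value e^{-iωz} at ω = 0). -/
/-!
Up to the factor `2π` and the substitution `ω = 2πξ`, the integral is the Fourier transform at `z`
of `ξ ↦ sinc (2πaξ) ^ N`, which is itself the Fourier transform of the `N`-fold convolution power
`p` of the uniform density on `[-a, a]`. For `N ≥ 2` the power of `sinc` decays like `ξ⁻²`, hence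
is integrable. As `p` vanishes outside `[-Na, Na]` and `|z| > Na`, `p` is zero near `-z`, so
Fourier inversion applies there and the transform of `𝓕 p` at `z` is `p (-z) = 0`.
-/

open MeasureTheory Real Complex
open Convolution FourierTransform Metric Pointwise

section ConvolutionPower

variable {E : Type*} [NormedAddCommGroup E] [InnerProductSpace ℝ E] [FiniteDimensional ℝ E]
  [MeasurableSpace E] [BorelSpace E]

/-- `f ⋆ f ⋆ ⋯ ⋆ f` with `n + 1` factors. -/
noncomputable def convPowSucc (f : E → ℂ) : ℕ → E → ℂ
  | 0 => f
  | n + 1 => f ⋆[ContinuousLinearMap.mul ℂ ℂ] convPowSucc f n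

variable {f : E → ℂ}

theorem integrable_convPowSucc (hf : Integrable f) : ∀ n, Integrable (convPowSucc f n)
  | 0 => hf
  | n + 1 => hf.integrable_convolution _ (integrable_convPowSucc hf n)

theorem fourier_convPowSucc (hf : Integrable f) (n : ℕ) (ξ : E) :
    𝓕 (convPowSucc f n) ξ = 𝓕 f ξ ^ (n + 1) := by
  induction n with
  | zero => simp [convPowSucc]
  | succ n ih =>
    rw [convPowSucc, Real.fourier_mul_convolution_eq hf (integrable_convPowSucc hf n), ih,
      pow_succ' _ (n + 1)]

theorem support_convPowSucc_subset {r : ℝ} (hr : 0 ≤ r)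
    (hf : Function.support f ⊆ closedBall 0 r) :
    ∀ n : ℕ, Function.support (convPowSucc f n) ⊆ closedBall 0 ((n + 1) * r)
  | 0 => by simpa [convPowSucc] using hf
  | n + 1 =>
    calc Function.support (convPowSucc f (n + 1))
        ⊆ closedBall 0 r + closedBall 0 ((n + 1) * r) :=
          (support_convolution_subset _).trans
            (Set.add_subset_add hf (support_convPowSucc_subset hr hf n))
      _ = closedBall 0 ((↑(n + 1) + 1) * r) := by
          rw [closedBall_add_closedBall hr (by positivity), add_zero]
          push_cast
          ring_nf

end ConvolutionPower

theorem MeasureTheory.Integrable.fourier_fourier_eq_zero {V F : Type*} [NormedAddCommGroup V]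
    [InnerProductSpace ℝ V] [FiniteDimensional ℝ V] [MeasurableSpace V] [BorelSpace V]
    [NormedAddCommGroup F] [NormedSpace ℂ F] [CompleteSpace F] {f : V → F}
    (hf : Integrable f) (h'f : Integrable (𝓕 f)) {v : V} (hv : -v ∉ tsupport f) :
    𝓕 (𝓕 f) v = 0 := by
  have hcont : ContinuousAt f (-v) := (notMem_tsupport_iff_eventuallyEq.1 hv).continuousAt
  rw [← neg_neg v, ← fourierInv_eq_fourier_neg, hf.fourierInv_fourier_eq h'f hcont,
    image_eq_zero_of_notMem_tsupport hv]

theorem Real.sinc_mul_eq_sin (x : ℝ) : sinc x * x = sin x := by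
  rcases eq_or_ne x 0 with rfl | hx
  · simp
  · rw [sinc_of_ne_zero hx, div_mul_cancel₀ _ hx]

theorem Real.sinc_sq_le_two_mul_inv_one_add_sq (x : ℝ) : sinc x ^ 2 ≤ 2 * (1 + x ^ 2)⁻¹ := by
  have h_le_one : sinc x ^ 2 ≤ 1 := by
    simpa using pow_le_one₀ (abs_nonneg _) (abs_sinc_le_one x) (n := 2)
  have h_mul_sq_le_one : sinc x ^ 2 * x ^ 2 ≤ 1 := by
    rw [← mul_pow, sinc_mul_eq_sin]
    exact sin_sq_le_one x
  rw [← div_eq_mul_inv, le_div_iff₀ (by positivity)]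
  linarith

theorem Real.integrable_sinc_pow {N : ℕ} (hN : 2 ≤ N) : Integrable fun x ↦ sinc x ^ N := by
  refine (integrable_inv_one_add_sq.const_mul 2).mono' (by fun_prop) (.of_forall fun x ↦ ?_)
  calc ‖sinc x ^ N‖ = |sinc x| ^ N := by rw [norm_pow, norm_eq_abs]
    _ ≤ |sinc x| ^ 2 := pow_le_pow_of_le_one (abs_nonneg _) (abs_sinc_le_one x) hN
    _ ≤ 2 * (1 + x ^ 2)⁻¹ := by
      rw [sq_abs]
      exact sinc_sq_le_two_mul_inv_one_add_sq x

theorem integral_Icc_exp_mul_I {a : ℝ} (ha : 0 < a) (t : ℝ) :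
    ∫ v in Set.Icc (-a) a, Complex.exp (t * v * I) = 2 * a * sinc (a * t) := by
  rw [integral_Icc_eq_integral_Ioc, ← intervalIntegral.integral_of_le (by linarith)]
  rcases eq_or_ne t 0 with rfl | ht
  · simp
    ring
  have htI : (t * I : ℂ) ≠ 0 := mul_ne_zero (by exact_mod_cast ht) I_ne_zero
  have ht' : (t : ℂ) ≠ 0 := by exact_mod_cast ht
  have ha' : (a : ℂ) ≠ 0 := by exact_mod_cast ha.ne'
  simp_rw [mul_right_comm _ _ I]
  rw [integral_exp_mul_complex htI, sinc_of_ne_zero (mul_ne_zero ha.ne' ht), ofReal_div,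
    ofReal_sin, Complex.sin]
  push_cast
  field_simp
  ring_nf
  linear_combination (exp (t * I * a) - exp (-(t * I * a))) * I_sq

noncomputable def uniformDensity (a : ℝ) : ℝ → ℂ :=
  Set.indicator (Set.Icc (-a) a) fun _ ↦ ((2 * a)⁻¹ : ℂ)

theorem integrable_uniformDensity (a : ℝ) : Integrable (uniformDensity a) :=
  (integrable_indicator_iff measurableSet_Icc).2 (integrableOn_const measure_Icc_lt_top.ne)

theorem support_uniformDensity_subset (a : ℝ) :
    Function.support (uniformDensity a) ⊆ closedBall 0 a := by
  rw [Real.closedBall_eq_Icc, zero_sub, zero_add]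
  exact Set.support_indicator_subset

theorem fourier_uniformDensity {a : ℝ} (ha : 0 < a) (ξ : ℝ) :
    𝓕 (uniformDensity a) ξ = sinc (2 * π * a * ξ) := by
  have h_integrand : ∀ v, exp (↑(-2 * π * v * ξ) * I) • uniformDensity a v =
      Set.indicator (Set.Icc (-a) a)
        (fun v ↦ (2 * a : ℂ)⁻¹ * exp (↑(-2 * π * ξ) * v * I)) v := by
    intro v
    by_cases hv : v ∈ Set.Icc (-a) a
    · simp only [uniformDensity, Set.indicator_of_mem hv, smul_eq_mul]
      push_cast
      ring_nf
    · simp [uniformDensity, hv]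
  have ha' : (a : ℂ) ≠ 0 := by exact_mod_cast ha.ne'
  rw [Real.fourier_real_eq_integral_exp_smul]
  simp_rw [h_integrand]
  rw [integral_indicator measurableSet_Icc, integral_const_mul, integral_Icc_exp_mul_I ha,
    ← sinc_neg]
  field_simp

theorem integral_mul_exp_eq_two_pi_mul_fourier (g : ℝ → ℂ) (z : ℝ) :
    ∫ ω : ℝ, g ω * exp (-I * ω * z) = 2 * π * 𝓕 (fun ξ ↦ g (2 * π * ξ)) z := by
  set h : ℝ → ℂ := fun ω ↦ g ω * exp (-I * ω * z)
  have h_fourier : 𝓕 (fun ξ ↦ g (2 * π * ξ)) z = ∫ ξ : ℝ, h (2 * π * ξ) := by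
    rw [Real.fourier_real_eq_integral_exp_smul]
    congr 1 with ξ
    simp only [h, smul_eq_mul, mul_comm (g _)]
    congr 2
    push_cast
    ring
  rw [h_fourier, Measure.integral_comp_mul_left, abs_of_pos (by positivity), real_smul,
    ← mul_assoc]
  push_cast
  field_simp

theorem ite_sin_div_eq_sinc {a : ℝ} (ha : a ≠ 0) (ω : ℝ) :
    (if ω = 0 then (1 : ℂ) else ((Real.sin (a * ω) / (a * ω) : ℝ) : ℂ)) = sinc (a * ω) := by
  simp [sinc_apply, ha, apply_ite (fun x : ℝ ↦ (x : ℂ))]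

/-- For every real `a > 0`, every integer `N ≥ 2`, and every real `z` with `|z| > N·a`,
the Fourier-inversion integral `∫ (sin(aω)/(aω))^N e^{-iωz} dω` vanishes (the sinc factor
being extended by the value `1` at `ω = 0`). -/
theorem stmt_0 (a : ℝ) (ha : 0 < a) (N : ℕ) (hN : 2 ≤ N) (z : ℝ)
    (hz : (N : ℝ) * a < |z|) :
    ∫ ω : ℝ,
      (if ω = 0 then (1 : ℂ) else ((Real.sin (a * ω) / (a * ω) : ℝ) : ℂ)) ^ N *
        Complex.exp (-Complex.I * ω * z) = 0 := by
  obtain ⟨n, rfl⟩ : ∃ n, N = n + 1 := ⟨N - 1, by omega⟩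
  set p := convPowSucc (uniformDensity a) n
  have hp : Integrable p := integrable_convPowSucc (integrable_uniformDensity a) n
  have h_fourier : 𝓕 p = fun ξ ↦ (sinc (a * (2 * π * ξ)) : ℂ) ^ (n + 1) := by
    ext ξ
    rw [fourier_convPowSucc (integrable_uniformDensity a), fourier_uniformDensity ha,
      mul_left_comm, ← mul_assoc]
  have h_fourier_integrable : Integrable (𝓕 p) := by
    rw [h_fourier]
    exact ((integrable_sinc_pow hN).comp_mul_left' (R := a * (2 * π)) (by positivity)).ofReal.congr
      (.of_forall fun ξ ↦ by simp [mul_assoc])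
  have h_tsupport : tsupport p ⊆ closedBall 0 ((n + 1) * a) :=
    closure_minimal (support_convPowSucc_subset ha.le (support_uniformDensity_subset a) n)
      isClosed_closedBall
  have hz_notMem : -z ∉ tsupport p := fun hmem ↦
    (mem_closedBall_zero_iff.1 (h_tsupport hmem)).not_gt (by simpa using hz)
  simp_rw [ite_sin_div_eq_sinc ha.ne']
  rw [integral_mul_exp_eq_two_pi_mul_fourier, ← h_fourier,
    hp.fourier_fourier_eq_zero h_fourier_integrable hz_notMem, mul_zero]
end

section
/- For every real number ω, the integral ∫_{-∞}^{∞} e^{iωx} / (π(1 + x²)) dx equals e^{-|ω|}; that is, the characteristic function of the standard Cauchy distribution is ω ↦ e^{-|ω|}. -/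
/-!
The Fourier transform of `x ↦ e^{-2π|x|}` is the Cauchy density `t ↦ 1 / (π(1 + t²))`:
split the integral at `0`, where both halves are integrals of complex exponentials. The Cauchy
density is integrable, so Fourier inversion recovers `e^{-2π|v|}` as
`∫ e^{2πitv} / (π(1 + t²)) dt`, and `v = ω / 2π` gives the theorem.
-/

open MeasureTheory Real Complex Set
open scoped FourierTransform

lemma cexp_mul_mul_exp_neg_mul_abs_of_nonneg {x : ℝ} (hx : 0 ≤ x) (a : ℂ) (b : ℝ) :
    cexp (a * x) * rexp (-(b * |x|)) = cexp ((a - b) * x) := by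
  rw [abs_of_nonneg hx, ofReal_exp, ← Complex.exp_add]
  push_cast
  ring_nf

lemma cexp_mul_mul_exp_neg_mul_abs_of_nonpos {x : ℝ} (hx : x ≤ 0) (a : ℂ) (b : ℝ) :
    cexp (a * x) * rexp (-(b * |x|)) = cexp ((a + b) * x) := by
  rw [abs_of_nonpos hx, ofReal_exp, ← Complex.exp_add]
  push_cast
  ring_nf

lemma integrable_cexp_mul_mul_exp_neg_mul_abs {a : ℂ} {b : ℝ} (ha : |a.re| < b) :
    Integrable (fun x : ℝ => cexp (a * x) * rexp (-(b * |x|))) := by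
  have hplus : 0 < (a + b).re := by rw [add_re, ofReal_re]; linarith [neg_abs_le a.re]
  have hminus : (a - b).re < 0 := by rw [sub_re, ofReal_re]; linarith [le_abs_self a.re]
  have hIic : IntegrableOn (fun x : ℝ => cexp (a * x) * rexp (-(b * |x|))) (Iic 0) :=
    (integrableOn_exp_mul_complex_Iic hplus 0).congr_fun
      (fun x hx => (cexp_mul_mul_exp_neg_mul_abs_of_nonpos hx a b).symm) measurableSet_Iic
  have hIoi : IntegrableOn (fun x : ℝ => cexp (a * x) * rexp (-(b * |x|))) (Ioi 0) :=
    (integrableOn_exp_mul_complex_Ioi hminus 0).congr_fun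
      (fun x hx => (cexp_mul_mul_exp_neg_mul_abs_of_nonneg hx.le a b).symm) measurableSet_Ioi
  rw [← integrableOn_univ, ← Iic_union_Ioi (a := (0 : ℝ))]
  exact hIic.union hIoi

theorem integral_cexp_mul_mul_exp_neg_mul_abs {a : ℂ} {b : ℝ} (ha : |a.re| < b) :
    ∫ x : ℝ, cexp (a * x) * rexp (-(b * |x|)) = 2 * b / (b ^ 2 - a ^ 2) := by
  have hplus : 0 < (a + b).re := by rw [add_re, ofReal_re]; linarith [neg_abs_le a.re]
  have hminus : (a - b).re < 0 := by rw [sub_re, ofReal_re]; linarith [le_abs_self a.re]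
  have hIic : ∫ x in Iic (0 : ℝ), cexp (a * x) * rexp (-(b * |x|)) = 1 / (a + b) := by
    rw [setIntegral_congr_fun measurableSet_Iic
      (fun x hx => cexp_mul_mul_exp_neg_mul_abs_of_nonpos hx a b),
      integral_exp_mul_complex_Iic hplus]
    simp
  have hIoi : ∫ x in Ioi (0 : ℝ), cexp (a * x) * rexp (-(b * |x|)) = 1 / (b - a) := by
    rw [setIntegral_congr_fun measurableSet_Ioi
      (fun x hx => cexp_mul_mul_exp_neg_mul_abs_of_nonneg hx.le a b),
      integral_exp_mul_complex_Ioi hminus]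
    simp only [ofReal_zero, mul_zero, Complex.exp_zero]
    rw [neg_div, ← div_neg, neg_sub]
  have hint := integrable_cexp_mul_mul_exp_neg_mul_abs ha
  rw [← intervalIntegral.integral_Iic_add_Ioi hint.integrableOn hint.integrableOn, hIic, hIoi]
  have hab : a + b ≠ 0 := fun h => by simp [h] at hplus
  have hba : (b : ℂ) - a ≠ 0 := fun h => by
    rw [← neg_sub, h, neg_zero, zero_re] at hminus
    exact lt_irrefl 0 hminus
  rw [show (b : ℂ) ^ 2 - a ^ 2 = (b - a) * (a + b) by ring]
  field_simp
  ring

lemma fourier_exp_neg_two_pi_abs (t : ℝ) :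
    𝓕 (fun x : ℝ => (rexp (-(2 * π * |x|)) : ℂ)) t = 1 / (π * (1 + (t : ℂ) ^ 2)) := by
  have hre : |(-(2 * π * t) * I).re| < 2 * π := by simpa using pi_pos
  rw [fourier_real_eq_integral_exp_smul]
  simp_rw [smul_eq_mul]
  have hexp (x : ℝ) : ((-2 * π * x * t : ℝ) : ℂ) * I = -(2 * π * t) * I * x := by
    push_cast
    ring
  simp_rw [hexp, integral_cexp_mul_mul_exp_neg_mul_abs hre]
  have hπ : (π : ℂ) ≠ 0 := ofReal_ne_zero.2 pi_ne_zero
  have ht : (1 : ℂ) + t ^ 2 ≠ 0 := by exact_mod_cast (by positivity : (1 : ℝ) + t ^ 2 ≠ 0)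
  rw [show (2 * π : ℝ) ^ 2 - (-(2 * π * t) * I) ^ 2 = 4 * π ^ 2 * (1 + t ^ 2) by
    push_cast; linear_combination (-4 * π ^ 2 * t ^ 2 : ℂ) * I_sq]
  field_simp
  push_cast
  ring

lemma integrable_cauchy_density :
    Integrable (fun t : ℝ => 1 / (π * (1 + (t : ℂ) ^ 2))) := by
  have h : Integrable (fun t : ℝ => ((π⁻¹ * (1 + t ^ 2)⁻¹ : ℝ) : ℂ)) :=
    (integrable_inv_one_add_sq.const_mul π⁻¹).ofReal
  refine h.congr (ae_of_all _ fun t => ?_)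
  push_cast
  rw [one_div, mul_inv]

lemma integral_exp_mul_cauchy_density (v : ℝ) :
    ∫ t : ℝ, cexp (2 * π * v * t * I) / (π * (1 + (t : ℂ) ^ 2))
      = (rexp (-(2 * π * |v|)) : ℂ) := by
  have hint : Integrable (fun x : ℝ => (rexp (-(2 * π * |x|)) : ℂ)) := by
    simpa using
      integrable_cexp_mul_mul_exp_neg_mul_abs (a := 0) (b := 2 * π) (by simpa using pi_pos)
  have hcont : Continuous (fun x : ℝ => (rexp (-(2 * π * |x|)) : ℂ)) := by fun_prop
  have hinv := hint.fourierInv_fourier_eq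
    (funext fourier_exp_neg_two_pi_abs ▸ integrable_cauchy_density) hcont.continuousAt (v := v)
  rw [fourierInv_eq_fourier_neg, fourier_real_eq_integral_exp_smul] at hinv
  simp_rw [fourier_exp_neg_two_pi_abs, smul_eq_mul, mul_one_div] at hinv
  rw [← hinv]
  congr with t
  push_cast
  ring_nf

/-- The characteristic function of the standard Cauchy distribution:
`∫ e^{iωx} / (π(1 + x²)) dx = e^{-|ω|}` for every real `ω`. -/
theorem stmt_3 (ω : ℝ) :
    ∫ x : ℝ, Complex.exp (Complex.I * ω * x) / (π * (1 + (x : ℂ) ^ 2))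
      = (Real.exp (-|ω|) : ℂ) := by
  have hscale : 2 * π * |ω / (2 * π)| = |ω| := by
    rw [abs_div, abs_of_pos two_pi_pos]
    field_simp
  rw [← hscale, ← integral_exp_mul_cauchy_density]
  congr with x
  push_cast
  field_simp
end

section
/- For every real number ω, the integral ∫_{-∞}^{∞} e^{iωx} / cosh(x) dx equals π / cosh(πω/2). Consequently the characteristic function of the probability density x ↦ 1/(π·cosh x) is ω ↦ 1/cosh(πω/2). -/
open MeasureTheory Real Complex

/-!
The substitution `t = σ(u)`, with `σ` the logistic sigmoid, turns `∫ e^{su} / (1 + e^u) du` into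
the Beta integral `B(s, 1 - s) = Γ(s) Γ(1 - s)`, which is `π / sin (π s)` by Euler's reflection
formula. Since `1 / cosh x = 2 e^x / (1 + e^{2x})`, scaling `u = 2x` gives
`∫ e^{zx} / cosh x dx = π / cos (π z / 2)` for `|Re z| < 1`, and `z = iω` is the theorem.
-/

namespace Real

lemma one_sub_sigmoid (x : ℝ) : 1 - sigmoid x = (1 + exp x)⁻¹ := by
  rw [← sigmoid_neg, sigmoid_def, neg_neg]

lemma one_sub_sigmoid_eq_exp (x : ℝ) : 1 - sigmoid x = exp (log (sigmoid x) - x) := by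
  rw [← sigmoid_neg, ← sigmoid_mul_rexp_neg, sub_eq_add_neg (log _), exp_add,
    exp_log (sigmoid_pos x)]

end Real

lemma Complex.ofReal_exp_cpow (a : ℝ) (z : ℂ) : (rexp a : ℂ) ^ z = cexp (a * z) := by
  rw [cpow_def_of_ne_zero (by exact_mod_cast (Real.exp_pos a).ne'),
    ← ofReal_log (Real.exp_pos a).le, Real.log_exp]

lemma abs_deriv_sigmoid_smul_betaIntegrand (s : ℂ) (u : ℝ) :
    |sigmoid u * (1 - sigmoid u)| •
        ((sigmoid u : ℂ) ^ (s - 1) * (1 - (sigmoid u : ℂ)) ^ (1 - s - 1)) =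
      cexp (s * u) / (1 + rexp u) := by
  have hrhs : cexp (s * u) / (1 + rexp u) = cexp (s * u) * (1 - sigmoid u : ℝ) := by
    rw [one_sub_sigmoid]; push_cast; rfl
  rw [abs_of_pos (mul_pos (sigmoid_pos u) (sub_pos.2 (sigmoid_lt_one u))), hrhs,
    show (1 : ℂ) - sigmoid u = (1 - sigmoid u : ℝ) by push_cast; rfl, one_sub_sigmoid_eq_exp]
  set a := Real.log (sigmoid u)
  rw [show sigmoid u = rexp a from (Real.exp_log (sigmoid_pos u)).symm, real_smul,
    ofReal_exp_cpow, ofReal_exp_cpow]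
  simp only [ofReal_mul, ofReal_exp, ← Complex.exp_add]
  congr 1
  push_cast
  ring

theorem integral_cexp_mul_div_one_add_exp {s : ℂ} (hs₀ : 0 < s.re) (hs₁ : s.re < 1) :
    ∫ u : ℝ, cexp (s * u) / (1 + rexp u) = π / Complex.sin (π * s) := by
  have hbeta : betaIntegral s (1 - s) =
      ∫ t in Set.Ioo (0 : ℝ) 1, (t : ℂ) ^ (s - 1) * (1 - (t : ℂ)) ^ (1 - s - 1) := by
    rw [betaIntegral, intervalIntegral.integral_of_le zero_le_one, integral_Ioc_eq_integral_Ioo]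
  have hsubst := integral_image_eq_integral_abs_deriv_smul MeasurableSet.univ
    (fun u _ ↦ (hasDerivAt_sigmoid u).hasDerivWithinAt) sigmoid_injective.injOn
    (fun t : ℝ ↦ (t : ℂ) ^ (s - 1) * (1 - (t : ℂ)) ^ (1 - s - 1))
  rw [Set.image_univ, range_sigmoid, ← hbeta, setIntegral_univ] at hsubst
  simp only [abs_deriv_sigmoid_smul_betaIntegrand] at hsubst
  rw [← hsubst, ← Complex.Gamma_mul_Gamma_one_sub, Gamma_mul_Gamma_eq_betaIntegral hs₀ (by simpa),
    add_sub_cancel, Complex.Gamma_one, one_mul]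

lemma cexp_mul_div_cosh_eq (z : ℂ) (x : ℝ) :
    cexp (z * x) / (Real.cosh x : ℂ) =
      2 * (cexp ((1 + z) / 2 * ↑(2 * x)) / (1 + ↑(rexp (2 * x)))) := by
  have hD : (1 + rexp (2 * x) : ℂ) ≠ 0 := by
    exact_mod_cast (by positivity : (0 : ℝ) < 1 + rexp (2 * x)).ne'
  have hE : cexp x ≠ 0 := Complex.exp_ne_zero x
  rw [ofReal_cosh, Complex.cosh, Complex.exp_neg]
  push_cast at hD ⊢
  rw [show (1 + z) / 2 * (2 * (x : ℂ)) = z * x + x by ring, Complex.exp_add]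
  rw [show 2 * (x : ℂ) = x + x by ring, Complex.exp_add] at hD ⊢
  field_simp
  ring

theorem integral_cexp_mul_div_cosh {z : ℂ} (hz : |z.re| < 1) :
    ∫ x : ℝ, cexp (z * x) / (Real.cosh x : ℂ) = π / Complex.cos (π * z / 2) := by
  obtain ⟨hz₀, hz₁⟩ := abs_lt.1 hz
  simp_rw [cexp_mul_div_cosh_eq, integral_const_mul]
  rw [Measure.integral_comp_mul_left (fun u : ℝ ↦ cexp ((1 + z) / 2 * u) / (1 + rexp u)),
    integral_cexp_mul_div_one_add_exp (by simp; linarith) (by simp; linarith),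
    show (π : ℂ) * ((1 + z) / 2) = π * z / 2 + π / 2 by ring, Complex.sin_add_pi_div_two,
    abs_of_pos (by norm_num), real_smul]
  push_cast
  ring

/-- `∫ e^{iωx}/cosh x dx = π / cosh(πω/2)`; consequently the characteristic function of
the hyperbolic-secant density `x ↦ 1/(π cosh x)` is `ω ↦ 1/cosh(πω/2)`. -/
theorem stmt_6 (ω : ℝ) :
    (∫ x : ℝ, Complex.exp (Complex.I * ω * x) / (Real.cosh x : ℂ)
      = ((π / Real.cosh (π * ω / 2) : ℝ) : ℂ)) ∧
    (∫ x : ℝ, Complex.exp (Complex.I * ω * x) / ((π : ℂ) * (Real.cosh x : ℂ))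
      = ((1 / Real.cosh (π * ω / 2) : ℝ) : ℂ)) := by
  have hcos : Complex.cos (π * (I * ω) / 2) = Real.cosh (π * ω / 2) := by
    rw [ofReal_cosh, ← Complex.cos_mul_I]; push_cast; ring_nf
  have h := integral_cexp_mul_div_cosh (z := I * ω) (by simp)
  rw [hcos] at h
  refine ⟨by exact_mod_cast h, ?_⟩
  simp_rw [div_mul_eq_div_div_swap, integral_div, h]
  have hcosh : Real.cosh (π * ω / 2) ≠ 0 := (Real.cosh_pos _).ne'
  push_cast
  field_simp
end

section
/- Let N ≥ 1 be an integer and define p_N(z) = (1/(2π)) ∫_{-∞}^{∞} (cosh(ω/√N))^{−N} e^{−iωz} dω for real z (the integral converges absolutely). Then the ratio p_N(z) / [ (N^{N/2}/(N−1)!) · z^{N−1} · exp(−π z √N / 2) ] converges to 1 as z → +∞. -/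
open MeasureTheory Real Complex Filter

/-!
The substitution `s = σ(2u)`, with `σ` the logistic sigmoid, turns the Fourier transform
of `cosh⁻ᴺ` into a Beta integral:
`∫ cosh(u)⁻ᴺ e^{-itu} du = 2^{N-1} Γ(N/2 - it/2) Γ(N/2 + it/2) / (N-1)!`,
and the numerator is `‖Γ(N/2 + it/2)‖²`. So `p_N(z)` is an explicit multiple of
`‖Γ(N/2 + i√N z/2)‖²`, and the theorem reduces to `‖Γ(N/2 + it)‖² ~ 2π t^{N-1} e^{-πt}`
as `t → ∞`. For `N = 1, 2` the reflection formula gives `‖Γ(1/2 + it)‖² = π / cosh(πt)` and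
`‖Γ(1 + it)‖² = πt / sinh(πt)`; the functional equation `‖Γ(s + 1)‖² = ‖s‖² ‖Γ(s)‖²`
raises `N` by `2` at the cost of a factor `N²/4 + t² ~ t²`.
-/

open Asymptotics
open scoped Nat ComplexConjugate

theorem Real.sigmoid_two_mul (u : ℝ) : sigmoid (2 * u) = exp u / (2 * cosh u) := by
  rw [sigmoid_def, cosh_eq, show -(2 * u) = -u + -u by ring, exp_add]
  have : exp u * exp (-u) = 1 := by rw [← exp_add]; simp
  field_simp
  linear_combination (-exp (-u)) * this

theorem Complex.ofReal_cpow_eq_exp {x : ℝ} (hx : 0 < x) (a : ℂ) :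
    (x : ℂ) ^ a = exp (Real.log x * a) := by
  rw [cpow_def_of_ne_zero (ofReal_ne_zero.mpr hx.ne'), ofReal_log hx.le]

open Set in
theorem Complex.betaIntegral_eq_integral_sigmoid (a b : ℂ) :
    betaIntegral a b = ∫ x : ℝ, (sigmoid x : ℂ) ^ a * (sigmoid (-x) : ℂ) ^ b := by
  have hderiv (x : ℝ) (_ : x ∈ univ) :
      HasDerivWithinAt sigmoid (sigmoid x * sigmoid (-x)) univ x := by
    rw [sigmoid_neg]; exact (hasDerivAt_sigmoid x).hasDerivWithinAt
  rw [betaIntegral, intervalIntegral.integral_of_le zero_le_one,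
    integral_Ioc_eq_integral_Ioo, ← range_sigmoid, ← image_univ,
    integral_image_eq_integral_abs_deriv_smul MeasurableSet.univ hderiv
      sigmoid_injective.injOn, setIntegral_univ]
  congr 1 with x
  have h0 : (sigmoid x : ℂ) ≠ 0 := ofReal_ne_zero.mpr (sigmoid_pos x).ne'
  have h1 : (1 - sigmoid x : ℂ) ≠ 0 := by
    rw [← ofReal_one, ← ofReal_sub, ← sigmoid_neg]
    exact ofReal_ne_zero.mpr (sigmoid_pos _).ne'
  rw [abs_of_pos (mul_pos (sigmoid_pos x) (sigmoid_pos (-x))), real_smul]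
  simp only [sigmoid_neg, ofReal_mul, ofReal_sub, ofReal_one]
  rw [cpow_sub _ _ h0, cpow_sub _ _ h1, cpow_one, cpow_one]
  field_simp

theorem Complex.sigmoid_two_mul_cpow_mul (a b : ℂ) (u : ℝ) :
    (sigmoid (2 * u) : ℂ) ^ a * (sigmoid (-(2 * u)) : ℂ) ^ b
      = exp ((a - b) * u) / ((2 * Real.cosh u : ℝ) : ℂ) ^ (a + b) := by
  have hlog (v : ℝ) : Real.log (sigmoid (2 * v)) = v - Real.log (2 * Real.cosh v) := by
    rw [sigmoid_two_mul, Real.log_div (exp_pos v).ne' (by positivity), Real.log_exp]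
  rw [ofReal_cpow_eq_exp (sigmoid_pos _), ofReal_cpow_eq_exp (sigmoid_pos _),
    ofReal_cpow_eq_exp (by positivity), ← exp_add, ← exp_sub, hlog, ← mul_neg, hlog,
    Real.cosh_neg]
  congr 1
  push_cast
  ring

theorem Complex.betaIntegral_eq_integral_cosh (a b : ℂ) :
    betaIntegral a b
      = 2 * ∫ u : ℝ, exp ((a - b) * u) / ((2 * Real.cosh u : ℝ) : ℂ) ^ (a + b) := by
  simp_rw [← sigmoid_two_mul_cpow_mul, betaIntegral_eq_integral_sigmoid]
  rw [Measure.integral_comp_mul_left (fun x => (sigmoid x : ℂ) ^ a * (sigmoid (-x) : ℂ) ^ b),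
    real_smul]
  norm_num
  ring

theorem Complex.norm_Gamma_sq_eq_Gamma_mul_Gamma_conj (s : ℂ) :
    (‖Gamma s‖ ^ 2 : ℂ) = Gamma s * Gamma (conj s) := by
  rw [Gamma_conj, mul_conj']

theorem integral_cosh_zpow_neg_mul_exp {N : ℕ} (hN : 1 ≤ N) (t : ℝ) :
    ∫ u : ℝ, (Real.cosh u : ℂ) ^ (-(N : ℤ)) * exp (-I * t * u)
      = ((2 ^ (N - 1) / (N - 1)! * ‖Complex.Gamma (N / 2 + (t / 2 : ℝ) * I)‖ ^ 2 : ℝ) : ℂ) := by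
  obtain ⟨n, rfl⟩ : ∃ n, N = n + 1 := ⟨N - 1, by omega⟩
  set s : ℂ := (n + 1 : ℕ) / 2 + (t / 2 : ℝ) * I
  have hs : 0 < s.re := by simp [s]; positivity
  have hsc : 0 < (conj s).re := by rwa [conj_re]
  have hconj : conj s = (n + 1 : ℕ) / 2 - (t / 2 : ℝ) * I := by
    simp only [s, map_add, map_div₀, map_mul, conj_ofReal, conj_I, map_natCast, map_ofNat]
    ring
  have hsum : conj s + s = (n : ℂ) + 1 := by rw [hconj, ← Nat.cast_succ]; ring
  have hdiff : conj s - s = -I * t := by rw [hconj]; simp only [s]; push_cast; ring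
  have hbeta := Gamma_mul_Gamma_eq_betaIntegral hsc hs
  rw [mul_comm, ← norm_Gamma_sq_eq_Gamma_mul_Gamma_conj, hsum,
    Complex.Gamma_nat_eq_factorial, betaIntegral_eq_integral_cosh, hsum, hdiff] at hbeta
  have hint (u : ℝ) : exp (-I * t * u) / ((2 * Real.cosh u : ℝ) : ℂ) ^ ((n : ℂ) + 1)
      = (2 ^ (n + 1))⁻¹ * ((Real.cosh u : ℂ) ^ (-((n + 1 : ℕ) : ℤ)) * exp (-I * t * u)) := by
    rw [← Nat.cast_succ, cpow_natCast, zpow_neg, zpow_natCast, ofReal_mul, mul_pow,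
      ofReal_ofNat]
    field_simp
  simp_rw [hint, integral_const_mul] at hbeta
  simp only [Nat.add_sub_cancel, ofReal_mul, ofReal_div, ofReal_pow, ofReal_natCast,
    ofReal_ofNat]
  rw [hbeta]
  have : (n ! : ℂ) ≠ 0 := by exact_mod_cast n.factorial_ne_zero
  field_simp
  ring

theorem integral_cosh_div_zpow_neg_mul_exp {N : ℕ} (hN : 1 ≤ N) {c : ℝ} (hc : 0 < c)
    (z : ℝ) :
    ∫ ω : ℝ, (Real.cosh (ω / c) : ℂ) ^ (-(N : ℤ)) * exp (-I * ω * z)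
      = ((c * (2 ^ (N - 1) / (N - 1)!) *
          ‖Complex.Gamma (N / 2 + (c * z / 2 : ℝ) * I)‖ ^ 2 : ℝ) : ℂ) := by
  have hphase (ω : ℝ) : -I * ω * z = -I * ((c * z : ℝ) : ℂ) * ((ω / c : ℝ) : ℂ) := by
    have : (c : ℂ) ≠ 0 := ofReal_ne_zero.2 hc.ne'
    push_cast; field_simp
  simp_rw [hphase]
  rw [Measure.integral_comp_div
      (fun u : ℝ => (Real.cosh u : ℂ) ^ (-(N : ℤ)) * exp (-I * (c * z : ℝ) * u)) c,
    integral_cosh_zpow_neg_mul_exp hN, abs_of_pos hc, real_smul, ← ofReal_mul, mul_assoc]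

theorem Complex.norm_Gamma_one_half_add_mul_I_sq (t : ℝ) :
    ‖Gamma (1 / 2 + t * I)‖ ^ 2 = π / Real.cosh (π * t) := by
  apply ofReal_injective
  have hconj : conj (1 / 2 + t * I) = 1 - (1 / 2 + t * I) := by
    simp only [map_add, map_div₀, map_one, map_ofNat, map_mul, conj_ofReal, conj_I]; ring
  have hsin : sin (π * (1 / 2 + t * I)) = Real.cosh (π * t) := by
    rw [show (π : ℂ) * (1 / 2 + t * I) = π / 2 + (π * t : ℝ) * I by push_cast; ring,
      sin_add, sin_pi_div_two, cos_pi_div_two, cos_mul_I, ofReal_cosh]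
    ring
  push_cast
  rw [norm_Gamma_sq_eq_Gamma_mul_Gamma_conj, hconj, Gamma_mul_Gamma_one_sub, hsin]
  push_cast; rfl

theorem Complex.norm_Gamma_one_add_mul_I_sq {t : ℝ} (ht : t ≠ 0) :
    ‖Gamma (1 + t * I)‖ ^ 2 = π * t / Real.sinh (π * t) := by
  apply ofReal_injective
  have hw : (t : ℂ) * I ≠ 0 := mul_ne_zero (ofReal_ne_zero.mpr ht) I_ne_zero
  have hconj : conj (1 + t * I) = 1 - t * I := by
    simp only [map_add, map_one, map_mul, conj_ofReal, conj_I]; ring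
  have hsin : sin (π * (t * I)) = Real.sinh (π * t) * I := by
    rw [← mul_assoc, ← ofReal_mul, sin_mul_I, ofReal_sinh]
  have hsinh : (Real.sinh (π * t) : ℂ) ≠ 0 :=
    ofReal_ne_zero.mpr (Real.sinh_ne_zero.mpr (mul_ne_zero pi_ne_zero ht))
  push_cast
  rw [norm_Gamma_sq_eq_Gamma_mul_Gamma_conj, hconj, add_comm, Gamma_add_one _ hw, mul_assoc,
    Gamma_mul_Gamma_one_sub, hsin]
  push_cast
  field_simp

theorem Complex.norm_Gamma_add_one_sq {s : ℂ} (hs : s ≠ 0) :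
    ‖Gamma (s + 1)‖ ^ 2 = ‖s‖ ^ 2 * ‖Gamma s‖ ^ 2 := by
  rw [Gamma_add_one s hs, norm_mul, mul_pow]

theorem Real.isEquivalent_exp_div_two_add_mul_exp_neg (c : ℝ) :
    (fun x => exp x / 2 + c * exp (-x)) ~[atTop] fun x => exp x / 2 := by
  have hlim : Tendsto (fun x : ℝ => x - -x) atTop atTop := by
    simpa only [sub_neg_eq_add, id_eq] using tendsto_id.atTop_add_atTop tendsto_id
  have ho : (fun x => exp (-x)) =o[atTop] exp := isLittleO_exp_comp_exp_comp.2 hlim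
  refine IsEquivalent.refl.add_isLittleO ?_
  exact ((isLittleO_const_mul_right_iff (by norm_num : (2⁻¹ : ℝ) ≠ 0)).2
    (ho.const_mul_left c)).congr_right fun x => by ring

theorem Real.isEquivalent_cosh_atTop : cosh ~[atTop] fun x => exp x / 2 :=
  (isEquivalent_exp_div_two_add_mul_exp_neg (1 / 2)).congr_left
    (Eventually.of_forall fun x => by simp only [cosh_eq]; ring)

theorem Real.isEquivalent_sinh_atTop : sinh ~[atTop] fun x => exp x / 2 :=
  (isEquivalent_exp_div_two_add_mul_exp_neg (-1 / 2)).congr_left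
    (Eventually.of_forall fun x => by simp only [sinh_eq]; ring)

theorem Complex.isEquivalent_norm_Gamma_half_nat_add_mul_I_sq {N : ℕ} (hN : 1 ≤ N) :
    (fun t : ℝ => ‖Gamma (N / 2 + t * I)‖ ^ 2) ~[atTop]
      fun t => 2 * π * t ^ (N - 1) * Real.exp (-(π * t)) := by
  have hπ : Tendsto (fun t : ℝ => π * t) atTop atTop := tendsto_id.const_mul_atTop pi_pos
  induction N using Nat.strong_induction_on with
  | _ N ih =>
  match N, hN with
  | 1, _ =>
    refine ((IsEquivalent.refl (u := fun _ => π)).div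
      (Real.isEquivalent_cosh_atTop.comp_tendsto hπ)).congr_left ?_ |>.congr_right ?_
    · exact Eventually.of_forall fun t => by
        simp only [Nat.cast_one, norm_Gamma_one_half_add_mul_I_sq]; rfl
    · exact Eventually.of_forall fun t => by simp [Real.exp_neg]; field_simp
  | 2, _ =>
    refine ((IsEquivalent.refl (u := fun t => π * t)).div
      (Real.isEquivalent_sinh_atTop.comp_tendsto hπ)).congr_left ?_ |>.congr_right ?_
    · filter_upwards [eventually_ne_atTop 0] with t ht
      rw [show ((2 : ℕ) : ℂ) / 2 = 1 by norm_num, norm_Gamma_one_add_mul_I_sq ht]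
      rfl
    · exact Eventually.of_forall fun t => by simp [Real.exp_neg]; field_simp
  | n + 3, _ =>
    set x : ℝ := (n + 1 : ℕ) / 2
    have hx : ((n + 1 : ℕ) / 2 : ℂ) = x := by simp [x]
    have hsq : (fun t : ℝ => x ^ 2 + t ^ 2) ~[atTop] fun t => t ^ 2 :=
      (isLittleO_const_left.2 (Or.inr (tendsto_norm_atTop_atTop.comp
        (tendsto_pow_atTop two_ne_zero)))).add_isEquivalent IsEquivalent.refl
    refine (hsq.mul (ih (n + 1) (by omega) (by omega))).congr_left ?_ |>.congr_right ?_
    · refine Eventually.of_forall fun t => ?_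
      have hs : (x + t * I : ℂ) ≠ 0 := fun h => by
        have hx0 : x ≠ 0 := by positivity
        simpa [hx0] using congrArg re h
      dsimp only
      have hx3 : ((n + 3 : ℕ) / 2 : ℂ) = x + 1 := by rw [← hx]; push_cast; ring
      rw [Pi.mul_apply, hx, hx3, add_right_comm, norm_Gamma_add_one_sq hs,
        ← normSq_eq_norm_sq (_ + _ * I), normSq_add_mul_I]
    · refine Eventually.of_forall fun t => ?_
      rw [Pi.mul_apply, show n + 3 - 1 = n + 2 by omega, show n + 1 - 1 = n by omega]
      ring

theorem Asymptotics.IsEquivalent.tendsto_ofReal_div {α : Type*} {l : Filter α}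
    {u v : α → ℝ} (huv : u ~[l] v) (hv : ∀ᶠ x in l, v x ≠ 0) :
    Tendsto (fun x => (u x : ℂ) / v x) l (nhds 1) := by
  simpa [Function.comp_def] using
    (continuous_ofReal.tendsto 1).comp ((isEquivalent_iff_tendsto_one hv).1 huv)

/-- Tail asymptotic (Eq. (21) of the paper) for sums of hyperbolic-secant variables:
with `p_N(z) = (1/(2π)) ∫ (cosh(ω/√N))^{-N} e^{-iωz} dω`, the ratio
`p_N(z) / [(N^{N/2}/(N-1)!) z^{N-1} e^{-πz√N/2}]` tends to `1` as `z → +∞`. -/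
theorem stmt_12 (N : ℕ) (hN : 1 ≤ N)
    (p : ℝ → ℂ)
    (hp : ∀ z : ℝ, p z = (1 / (2 * π)) *
      ∫ ω : ℝ, ((Real.cosh (ω / Real.sqrt N) : ℂ)) ^ (-(N : ℤ)) *
        Complex.exp (-Complex.I * ω * z)) :
    Tendsto (fun z : ℝ => p z /
        ((((N : ℝ) ^ ((N : ℝ) / 2) / (Nat.factorial (N - 1)) * z ^ (N - 1) *
          Real.exp (-(π * z * Real.sqrt N) / 2) : ℝ)) : ℂ))
      atTop (nhds 1) := by
  set c := √(N : ℝ)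
  have hc : 0 < c := Real.sqrt_pos.2 (by exact_mod_cast hN)
  set K := c * (2 ^ (N - 1) / (N - 1)!) / (2 * π)
  set H : ℝ → ℝ := fun t => 2 * π * t ^ (N - 1) * Real.exp (-(π * t))
  have hpK (z : ℝ) :
      p z = ((K * ‖Complex.Gamma (N / 2 + (c * z / 2 : ℝ) * I)‖ ^ 2 : ℝ) : ℂ) := by
    rw [hp z, integral_cosh_div_zpow_neg_mul_exp hN hc]
    simp only [K]
    push_cast
    ring
  have hKH (z : ℝ) : (N : ℝ) ^ ((N : ℝ) / 2) / (N - 1)! * z ^ (N - 1) *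
      Real.exp (-(π * z * c) / 2) = K * H (c * z / 2) := by
    have hcN : c ^ N = c * c ^ (N - 1) := by rw [← pow_succ', Nat.sub_add_cancel hN]
    simp only [K, H]
    rw [rpow_div_two_eq_sqrt _ (Nat.cast_nonneg N), rpow_natCast, hcN, div_pow, mul_pow]
    field_simp
  have hlin : Tendsto (fun z : ℝ => c * z / 2) atTop atTop :=
    (tendsto_id.const_mul_atTop hc).atTop_div_const two_pos
  have hequiv := (IsEquivalent.refl (u := fun _ => K)).mul
    ((isEquivalent_norm_Gamma_half_nat_add_mul_I_sq hN).comp_tendsto hlin)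
  have hne : ∀ᶠ z : ℝ in atTop, K * H (c * z / 2) ≠ 0 := by
    filter_upwards [eventually_gt_atTop 0] with z hz
    positivity
  refine (hequiv.tendsto_ofReal_div hne).congr fun z => ?_
  simp only [Pi.mul_apply, Function.comp_apply, hpK, hKH]
  rfl
end
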